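/- arXiv:2006.10307 — 4 statements merged into one kernel-verified Lean document; each statement's English description precedes it below -/
import Mathlib

section
/- Let A = (a_1,...,a_n) be a configuration of n > d+1 points in ℝ^d, and let B ⊂ [n] be a set of d+1 indices such that the points (a_i)_{i∈B} are affinely independent. Then for every x in the convex hull of A there exists an index b ∈ B such that (i) a_b and x lie in the same closed halfspace determined by the affine hyperplane spanned by {a_i : i ∈ B \ {b}}, and (ii) x lies in the convex hull of the points {a_i : i ∈ [n] \ {b}}. -/
/-!
Write `x = ∑ tᵢ aᵢ` with the barycentric coordinates `t` of `x` with respect to the basis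
`(a_i)_{i ∈ B}` (extended by zero), and `x = ∑ wᵢ aᵢ` with convex weights `w`. If `w ≠ t`, then
`t - w` is an affine dependence among the `aᵢ` whose positive entries lie where `t > w ≥ 0`, hence
in `B`; if `w = t`, then `t ≥ 0`, and expressing a point `a_j`, `j ∉ B`, in barycentric coordinates
gives an affine dependence positive only on `B`. Carathéodory's elimination step along either
dependence removes an index `b ∈ B` with `t_b ≥ 0` from the convex combination. Finally every
affine `f` vanishing on `a_i`, `i ∈ B \ {b}`, satisfies `f x = t_b f(a_b)`, which gives the
halfspace condition.
-/

open Finset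

section WeightedSums

variable {k E ι : Type*} [Field k] [AddCommGroup E] [Module k E] [Fintype ι] {a : ι → E}

lemma exists_sum_smul_eq_of_mem_affineSpan_image {s : Set ι} {y : E}
    (hy : y ∈ affineSpan k (a '' s)) :
    ∃ t : ι → k, (∀ i ∉ s, t i = 0) ∧ ∑ i, t i = 1 ∧ ∑ i, t i • a i = y := by
  classical
  obtain ⟨fs, w, hfs, hw1, rfl⟩ := eq_affineCombination_of_mem_affineSpan_image hy
  have hw1' : ∑ i, Set.indicator fs w i = 1 := by
    rwa [← sum_indicator_subset _ fs.subset_univ] at hw1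
  refine ⟨Set.indicator fs w, fun i hi => Set.indicator_of_notMem (fun h => hi (hfs h)) w,
    hw1', ?_⟩
  rw [affineCombination_indicator_subset w a fs.subset_univ,
    affineCombination_eq_linear_combination _ _ _ hw1']

variable [LinearOrder k] [IsStrictOrderedRing k]

lemma exists_nonneg_sum_smul_eq_of_mem_convexHull_range {x : E}
    (hx : x ∈ convexHull k (Set.range a)) :
    ∃ w : ι → k, (∀ i, 0 ≤ w i) ∧ ∑ i, w i = 1 ∧ ∑ i, w i • a i = x := by
  classical
  rw [convexHull_range_eq_exists_affineCombination] at hx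
  obtain ⟨s, w, hw0, hw1, rfl⟩ := hx
  refine ⟨Set.indicator s w, fun i => Set.indicator_nonneg hw0 i, ?_, ?_⟩
  · rwa [← sum_indicator_subset _ s.subset_univ] at hw1
  · rw [affineCombination_indicator_subset w a s.subset_univ,
      affineCombination_eq_linear_combination]
    rwa [← sum_indicator_subset _ s.subset_univ] at hw1

lemma sum_smul_mem_convexHull_image_ne {u : ι → k} {b : ι} (hu0 : ∀ i, 0 ≤ u i)
    (hu1 : ∑ i, u i = 1) (hub : u b = 0) :
    ∑ i, u i • a i ∈ convexHull k (a '' {i | i ≠ b}) := by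
  rw [← finsum_eq_sum_of_fintype]
  refine (convex_convexHull k _).finsum_mem hu0 (by rwa [finsum_eq_sum_of_fintype]) ?_
  exact fun i hi => subset_convexHull k _ ⟨i, fun h => hi (h ▸ hub), rfl⟩

/-- Carathéodory's elimination step: moving the weights `v` along an affine dependence `z` as far
as they stay nonnegative kills a weight at which `z` is positive. -/
lemma exists_pos_and_sum_smul_mem_convexHull_image_ne {v z : ι → k} (hv0 : ∀ i, 0 ≤ v i)
    (hv1 : ∑ i, v i = 1) (hz : ∑ i, z i = 0) (hza : ∑ i, z i • a i = 0) (hz0 : z ≠ 0) :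
    ∃ b, 0 < z b ∧ ∑ i, v i • a i ∈ convexHull k (a '' {i | i ≠ b}) := by
  classical
  obtain ⟨i₀, hi₀⟩ := Function.ne_iff.1 hz0
  obtain ⟨i₁, -, hi₁⟩ := exists_pos_of_sum_zero_of_exists_nonzero z hz ⟨i₀, mem_univ _, hi₀⟩
  obtain ⟨b, hb, hmin⟩ := ({i | 0 < z i} : Finset ι).exists_min_image (fun i => v i / z i)
    ⟨i₁, by simpa using hi₁⟩
  have hzb : 0 < z b := (mem_filter.1 hb).2
  set r := v b / z b
  have hu0 : ∀ i, 0 ≤ v i - r * z i := by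
    intro i
    rcases lt_or_ge 0 (z i) with hzi | hzi
    · have := (le_div_iff₀ hzi).1 (hmin i (by simpa using hzi))
      linarith
    · have := mul_nonpos_of_nonneg_of_nonpos (div_nonneg (hv0 b) hzb.le) hzi
      linarith [hv0 i]
  have hsum : ∑ i, v i • a i = ∑ i, (v i - r * z i) • a i := by
    simp only [sub_smul, mul_smul, sum_sub_distrib, ← smul_sum, hza, smul_zero, sub_zero]
  refine ⟨b, hzb, hsum ▸ sum_smul_mem_convexHull_image_ne hu0 ?_ ?_⟩
  · rw [sum_sub_distrib, ← mul_sum, hv1, hz, mul_zero, sub_zero]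
  · rw [div_mul_cancel₀ _ hzb.ne', sub_self]

variable {B : Finset ι} {t : ι → k}

lemma exists_mem_and_sum_smul_mem_convexHull_image_ne_of_nonneg (ht0 : ∀ i, 0 ≤ t i)
    (ht1 : ∑ i, t i = 1) {j : ι} (hj : j ∉ B) {c : ι → k}
    (hcB : ∀ i ∉ B, c i = 0) (hc1 : ∑ i, c i = 1) (hca : ∑ i, c i • a i = a j) :
    ∃ b ∈ B, ∑ i, t i • a i ∈ convexHull k (a '' {i | i ≠ b}) := by
  classical
  set z : ι → k := c - Pi.single j 1
  have hzj : z j = -1 := by simp [z, hcB j hj]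
  obtain ⟨b, hzb, hmem⟩ := exists_pos_and_sum_smul_mem_convexHull_image_ne (a := a) (z := z)
    ht0 ht1 (by simp [z, sum_sub_distrib, hc1]) (by simp [z, sub_smul, sum_sub_distrib, hca])
    (fun h => by simp [h] at hzj)
  refine ⟨b, ?_, hmem⟩
  by_contra hb
  have hzb' : z b ≤ 0 := by
    simp only [z, Pi.sub_apply, hcB b hb, zero_sub, neg_nonpos]
    rw [Pi.single_apply]
    split_ifs <;> norm_num
  exact hzb'.not_gt hzb

lemma exists_pos_and_sum_smul_mem_convexHull_image_ne_of_ne (htB : ∀ i ∉ B, t i = 0)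
    (ht1 : ∑ i, t i = 1) {w : ι → k} (hw0 : ∀ i, 0 ≤ w i) (hw1 : ∑ i, w i = 1)
    (hwt : ∑ i, w i • a i = ∑ i, t i • a i) (hne : w ≠ t) :
    ∃ b ∈ B, 0 < t b ∧ ∑ i, t i • a i ∈ convexHull k (a '' {i | i ≠ b}) := by
  obtain ⟨b, hzb, hmem⟩ := exists_pos_and_sum_smul_mem_convexHull_image_ne (a := a) (z := t - w)
    hw0 hw1 (by simp [sum_sub_distrib, ht1, hw1]) (by simp [sub_smul, sum_sub_distrib, hwt])
    (sub_ne_zero.2 hne.symm)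
  have htb : 0 < t b := (hw0 b).trans_lt (sub_pos.1 hzb)
  exact ⟨b, by_contra fun hb => htb.ne' (htB b hb), htb, hwt ▸ hmem⟩

lemma zero_le_apply_mul_apply_sum_smul [DecidableEq ι] (f : E →ᵃ[k] k) (htB : ∀ i ∉ B, t i = 0)
    (ht1 : ∑ i, t i = 1) {b : ι} (hf : ∀ i ∈ B.erase b, f (a i) = 0) (htb : 0 ≤ t b) :
    0 ≤ f (a b) * f (∑ i, t i • a i) := by
  have hfx : f (∑ i, t i • a i) = t b * f (a b) := by
    rw [← affineCombination_eq_linear_combination _ _ _ ht1, map_affineCombination _ _ _ ht1,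
      affineCombination_eq_linear_combination _ _ _ ht1]
    refine (sum_eq_single b (fun i _ hib => ?_) (by simp)).trans rfl
    by_cases hiB : i ∈ B
    · simp [hf i (mem_erase.2 ⟨hib, hiB⟩)]
    · simp [htB i hiB]
  rw [hfx, mul_left_comm]
  exact mul_nonneg htb (mul_self_nonneg _)

end WeightedSums

/-- **Carathéodory-type lemma.** For a configuration of `n > d+1` points in `ℝ^d` and a
set `B` of `d+1` indices of affinely independent points, every `x` in the convex hull of
the configuration admits an index `b ∈ B` such that `a b` and `x` lie in the same closed
halfspace of the hyperplane spanned by the points of `B \ {b}`, and `x` lies in the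
convex hull of the points indexed by `[n] \ {b}`. -/
theorem caratheodory_type (n d : ℕ) (hn : d + 1 < n) (a : Fin n → (Fin d → ℝ))
    (B : Finset (Fin n)) (hB : B.card = d + 1)
    (hind : AffineIndependent ℝ (fun i : B => a i))
    (x : Fin d → ℝ) (hx : x ∈ convexHull ℝ (Set.range a)) :
    ∃ b ∈ B,
      (∀ f : (Fin d → ℝ) →ᵃ[ℝ] ℝ, (∀ i ∈ B.erase b, f (a i) = 0) → 0 ≤ f (a b) * f x) ∧
      x ∈ convexHull ℝ (a '' {i | i ≠ b}) := by
  have hspan : affineSpan ℝ (a '' B) = ⊤ := by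
    rw [Set.image_eq_range]
    exact hind.affineSpan_eq_top_iff_card_eq_finrank_add_one.2 (by simp [hB])
  have coords (y : Fin d → ℝ) := exists_sum_smul_eq_of_mem_affineSpan_image
    (hspan ▸ AffineSubspace.mem_top ℝ _ y : y ∈ affineSpan ℝ (a '' B))
  obtain ⟨j, -, hj⟩ := exists_mem_notMem_of_card_lt_card (s := B) (t := univ)
    (by simpa [hB] using hn)
  obtain ⟨c, hcB, hc1, hca⟩ := coords (a j)
  obtain ⟨t, htB, ht1, rfl⟩ := coords x
  obtain ⟨w, hw0, hw1, hwt⟩ := exists_nonneg_sum_smul_eq_of_mem_convexHull_range hx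
  obtain ⟨b, hbB, htb, hmem⟩ : ∃ b ∈ B, 0 ≤ t b ∧
      ∑ i, t i • a i ∈ convexHull ℝ (a '' {i | i ≠ b}) := by
    by_cases hne : w = t
    · subst hne
      obtain ⟨b, hbB, hmem⟩ := exists_mem_and_sum_smul_mem_convexHull_image_ne_of_nonneg
        hw0 ht1 hj hcB hc1 hca
      exact ⟨b, hbB, hw0 b, hmem⟩
    · obtain ⟨b, hbB, htb, hmem⟩ :=
        exists_pos_and_sum_smul_mem_convexHull_image_ne_of_ne htB ht1 hw0 hw1 hwt hne
      exact ⟨b, hbB, htb.le, hmem⟩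
  exact ⟨b, hbB, fun f hf => zero_le_apply_mul_apply_sum_smul f htB ht1 hf htb, hmem⟩
end

section
/- Let B and B' be two sets of d+1 indices into a point configuration A in ℝ^d, each indexing affinely independent points, whose lifted vectors v_i = (a_i, 1) ∈ ℝ^{d+1} admit no positive linear dependency of the form ∑_{b∈B} β_b v_b + ∑_{b'∈B'} γ_{b'}(−v_{b'}) = 0 with all β_b, γ_{b'} > 0. Then the simplices Δ_B = conv({a_b : b ∈ B}) and Δ_{B'} = conv({a_{b'} : b' ∈ B'}) have disjoint interiors, separated by a hyperplane. -/
/-!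
Stiemke's lemma, proved by separating the open positive orthant from the kernel of
`c ↦ ∑ cᵢ • wᵢ`, turns the absence of a positive dependency among the lifts `(a_b, 1)`,
`b ∈ B`, and `-(a_{b'}, 1)`, `b' ∈ B'`, into a linear functional `N` on `ℝ^d × ℝ` that is
nonnegative on all of them and nonzero on one. The affine function `f x = N (x, 1)` is then
`≥ 0` on `Δ_B` and `≤ 0` on `Δ_{B'}`; as both sets are nonempty, `f` is not constant, so the
two interiors lie in the disjoint open half-spaces `{f > 0}` and `{f < 0}`.
-/

open Set

lemma LinearMap.apply_eq_zero_of_forall_mem_le {M : Type*} [AddCommGroup M] [Module ℝ M]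
    (φ : M →ₗ[ℝ] ℝ) {p : Submodule ℝ M} {u : ℝ} (h : ∀ x ∈ p, u ≤ φ x) {x : M} (hx : x ∈ p) :
    φ x = 0 := by
  by_contra hφ
  have := h (((u - 1) / φ x) • x) (p.smul_mem _ hx)
  rw [map_smul, smul_eq_mul, div_mul_cancel₀ _ hφ] at this
  linarith

section Stiemke

variable {ι E : Type*} [AddCommGroup E] [Module ℝ E]

theorem exists_dual_nonneg_of_not_exists_pos_sum_smul_eq_zero [Fintype ι] (w : ι → E)
    (h : ¬ ∃ c : ι → ℝ, (∀ i, 0 < c i) ∧ ∑ i, c i • w i = 0) :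
    ∃ N : Module.Dual ℝ E, (∀ i, 0 ≤ N (w i)) ∧ ∃ i, N (w i) ≠ 0 := by
  classical
  set T := Fintype.linearCombination ℝ w
  set P : Set (ι → ℝ) := univ.pi fun _ => Ioi 0
  have hdisj : Disjoint P (LinearMap.ker T) := by
    refine Set.disjoint_left.2 fun c hc hcT => h ⟨c, fun i => hc i (mem_univ i), ?_⟩
    simpa [T, Fintype.linearCombination_apply] using hcT
  obtain ⟨φ, u, hφP, hφK⟩ := geometric_hahn_banach_open
    (convex_pi fun _ _ => convex_Ioi 0) (isOpen_set_pi finite_univ fun _ _ => isOpen_Ioi)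
    (LinearMap.ker T).convex hdisj
  have hu : u ≤ 0 := by simpa using hφK 0 (zero_mem _)
  -- `φ` is bounded below on the subspace `ker T`, so it vanishes there and factors through `T`.
  obtain ⟨ψ, hψ⟩ : (φ : Module.Dual ℝ (ι → ℝ)) ∈ LinearMap.range T.dualMap := by
    rw [LinearMap.range_dualMap_eq_dualAnnihilator_ker, Submodule.mem_dualAnnihilator]
    exact fun k hk => (φ : (ι → ℝ) →ₗ[ℝ] ℝ).apply_eq_zero_of_forall_mem_le hφK hk
  have hψT : ∀ c, ψ (T c) = φ c := fun c => LinearMap.congr_fun hψ c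
  have hψw : ∀ i, ψ (w i) = φ (Pi.single i 1) := fun i => by
    rw [← hψT, Fintype.linearCombination_apply_single, one_smul]
  refine ⟨-ψ, fun i => ?_, ?_⟩
  · have hsingle : Pi.single i 1 ∈ closure P := by
      rw [closure_pi_set]
      intro j _
      rw [closure_Ioi]
      exact (Pi.single_nonneg.2 zero_le_one : (0 : ι → ℝ) ≤ Pi.single i 1) j
    have := (isClosed_Iic.preimage φ.continuous).closure_subset_iff.2
      (fun c hc => (hφP c hc).le.trans hu) hsingle
    simpa [hψw] using this
  · by_contra! hzero
    have hφ1 := hφP 1 fun _ _ => by simp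
    rw [← hψT, Fintype.linearCombination_apply, map_sum] at hφ1
    simp only [LinearMap.neg_apply, neg_eq_zero] at hzero
    simp [hzero] at hφ1
    linarith

theorem Finset.exists_dual_nonneg_of_not_exists_pos_sum_smul_eq_zero (s : Finset ι) (w : ι → E)
    (h : ¬ ∃ c : ι → ℝ, (∀ i ∈ s, 0 < c i) ∧ ∑ i ∈ s, c i • w i = 0) :
    ∃ N : Module.Dual ℝ E, (∀ i ∈ s, 0 ≤ N (w i)) ∧ ∃ i ∈ s, N (w i) ≠ 0 := by
  classical
  obtain ⟨N, hN, i, hi⟩ :=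
    _root_.exists_dual_nonneg_of_not_exists_pos_sum_smul_eq_zero (fun i : s => w i) <| by
      rintro ⟨c, hc, hcw⟩
      refine h ⟨fun i => if hi : i ∈ s then c ⟨i, hi⟩ else 0,
        fun i hi => by simpa [hi] using hc ⟨i, hi⟩, ?_⟩
      rw [← Finset.sum_coe_sort]
      simpa using hcw
  exact ⟨N, fun i hi => hN ⟨i, hi⟩, i, i.2, hi⟩

end Stiemke

def dehomogenize {E : Type*} [AddCommGroup E] [Module ℝ E] (N : Module.Dual ℝ (E × ℝ)) :
    E →ᵃ[ℝ] ℝ :=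
  (N ∘ₗ LinearMap.inl ℝ E ℝ).toAffineMap + AffineMap.const ℝ E (N (0, 1))

theorem dehomogenize_apply {E : Type*} [AddCommGroup E] [Module ℝ E]
    (N : Module.Dual ℝ (E × ℝ)) (x : E) : dehomogenize N x = N (x, 1) := by
  simp [dehomogenize, ← map_add]

theorem AffineMap.linear_ne_zero_of_nonneg_of_nonpos {V P : Type*} [AddCommGroup V]
    [Module ℝ V] [AddTorsor V P] (f : P →ᵃ[ℝ] ℝ) {x y z : P} (hx : 0 ≤ f x) (hy : f y ≤ 0)
    (hz : f z ≠ 0) : f.linear ≠ 0 := by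
  intro h
  have hconst : ∀ p, f p = f x := fun p =>
    sub_eq_zero.1 (by simpa [h] using (f.linearMap_vsub p x).symm)
  exact hz (by linarith [hconst y, hconst z])

theorem AffineMap.disjoint_interior_of_subset_preimage {E : Type*} [NormedAddCommGroup E]
    [NormedSpace ℝ E] [FiniteDimensional ℝ E] {f : E →ᵃ[ℝ] ℝ} (hf : f.linear ≠ 0) {s t : Set E}
    (hs : s ⊆ f ⁻¹' Ici 0) (ht : t ⊆ f ⁻¹' Iic 0) : Disjoint (interior s) (interior t) := by
  have hopen : IsOpenMap f := AffineMap.isOpenMap_linear_iff.1 <|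
    f.linear.isOpenMap_of_finiteDimensional (LinearMap.surjective_of_ne_zero hf)
  have hint : ∀ u : Set ℝ, interior (f ⁻¹' u) = f ⁻¹' interior u := fun u =>
    (hopen.preimage_interior_eq_interior_preimage f.continuous_of_finiteDimensional u).symm
  refine Disjoint.mono (interior_mono hs) (interior_mono ht) ?_
  rw [hint, hint, interior_Ici, interior_Iic]
  exact Ioi_disjoint_Iio_same.preimage f

theorem simplices_separated_general (n d : ℕ) (a : Fin n → (Fin d → ℝ))
    (B B' : Finset (Fin n)) (hB : B.card = d + 1) (hB' : B'.card = d + 1)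
    (hdep : ¬ ∃ β γ : Fin n → ℝ, (∀ b ∈ B, 0 < β b) ∧ (∀ b' ∈ B', 0 < γ b') ∧
      (∑ b ∈ B, β b • a b) - (∑ b' ∈ B', γ b' • a b') = 0 ∧
      (∑ b ∈ B, β b) - (∑ b' ∈ B', γ b') = 0) :
    (∃ f : (Fin d → ℝ) →ᵃ[ℝ] ℝ, f.linear ≠ 0 ∧
      (∀ b ∈ B, 0 ≤ f (a b)) ∧ (∀ b' ∈ B', f (a b') ≤ 0)) ∧
    interior (convexHull ℝ (a '' ↑B)) ∩ interior (convexHull ℝ (a '' ↑B')) = ∅ := by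
  obtain ⟨b₀, hb₀⟩ : B.Nonempty := Finset.card_pos.1 (by omega)
  obtain ⟨b₀', hb₀'⟩ : B'.Nonempty := Finset.card_pos.1 (by omega)
  let v : Fin n → (Fin d → ℝ) × ℝ := fun i => (a i, 1)
  obtain ⟨N, hN, i, hi, hNi⟩ :=
    (B.disjSum B').exists_dual_nonneg_of_not_exists_pos_sum_smul_eq_zero (Sum.elim v (-v)) <| by
      rintro ⟨c, hc, hcv⟩
      refine hdep ⟨c ∘ Sum.inl, c ∘ Sum.inr, fun b hb => hc _ (by simpa using hb),
        fun b hb => hc _ (by simpa using hb), ?_, ?_⟩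
      · simpa [v, Finset.sum_disjSum, Prod.fst_sum, sub_eq_add_neg] using congrArg Prod.fst hcv
      · simpa [v, Finset.sum_disjSum, Prod.snd_sum, sub_eq_add_neg] using congrArg Prod.snd hcv
  let f := dehomogenize N
  have hfB : ∀ b ∈ B, 0 ≤ f (a b) := fun b hb => by
    simpa [f, dehomogenize_apply, v] using hN (.inl b) (by simpa using hb)
  have hfB' : ∀ b ∈ B', f (a b) ≤ 0 := fun b hb => by
    simpa [f, dehomogenize_apply, v, -Prod.neg_mk] using hN (.inr b) (by simpa using hb)
  obtain ⟨z, hz⟩ : ∃ z, f (a z) ≠ 0 := by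
    rcases i with b | b <;>
      exact ⟨b, by simpa [f, dehomogenize_apply, v, -Prod.neg_mk] using hNi⟩
  have hf : f.linear ≠ 0 := f.linear_ne_zero_of_nonneg_of_nonpos (hfB b₀ hb₀) (hfB' b₀' hb₀') hz
  refine ⟨⟨f, hf, hfB, hfB'⟩, Set.disjoint_iff_inter_eq_empty.1 <|
    AffineMap.disjoint_interior_of_subset_preimage hf ?_ ?_⟩
  · exact convexHull_min (by rintro _ ⟨b, hb, rfl⟩; exact hfB b hb)
      ((convex_Ici 0).affine_preimage f)
  · exact convexHull_min (by rintro _ ⟨b, hb, rfl⟩; exact hfB' b hb)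
      ((convex_Iic 0).affine_preimage f)

/-- **Separation of simplices.** If the lifted vectors `(a_b, 1)` for `b ∈ B` and the
negated lifted vectors `-(a_{b'}, 1)` for `b' ∈ B'` admit no positive linear dependency,
then the simplices `conv({a_b : b ∈ B})` and `conv({a_{b'} : b' ∈ B'})` are separated by
an affine hyperplane and have disjoint interiors. (The positive dependency
`∑_{b∈B} β_b (a_b,1) - ∑_{b'∈B'} γ_{b'} (a_{b'},1) = 0` is stated by splitting the lift
into its `ℝ^d`-component and its last (all-ones) component.) -/
theorem simplices_separated (n d : ℕ) (a : Fin n → (Fin d → ℝ))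
    (B B' : Finset (Fin n)) (hB : B.card = d + 1) (hB' : B'.card = d + 1)
    (hiB : AffineIndependent ℝ (fun i : B => a i))
    (hiB' : AffineIndependent ℝ (fun i : B' => a i))
    (hdep : ¬ ∃ β γ : Fin n → ℝ, (∀ b ∈ B, 0 < β b) ∧ (∀ b' ∈ B', 0 < γ b') ∧
      (∑ b ∈ B, β b • a b) - (∑ b' ∈ B', γ b' • a b') = 0 ∧
      (∑ b ∈ B, β b) - (∑ b' ∈ B', γ b') = 0) :
    (∃ f : (Fin d → ℝ) →ᵃ[ℝ] ℝ, f.linear ≠ 0 ∧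
      (∀ b ∈ B, 0 ≤ f (a b)) ∧ (∀ b' ∈ B', f (a b') ≤ 0)) ∧
    interior (convexHull ℝ (a '' ↑B)) ∩ interior (convexHull ℝ (a '' ↑B')) = ∅ :=
  simplices_separated_general n d a B B' hB hB' hdep
end

section
/- Let Π_{I,B} and Π_{I',B'} be two full-dimensional parallelepiped tiles of a fine zonotopal tiling sharing a facet Π_{J,C} with C = B ∩ B', |C| = d, and write {b} = B \ B', {b'} = B' \ B. Let N be a nonzero vector normal to the shared facet (⟨v_c, N⟩ = 0 for all c ∈ C) oriented so that ⟨z − z', N⟩ ≥ 0 for all z ∈ Π_{I,B} and z' ∈ Π_{I',B'}. If |I| = |I'| then sign(⟨v_b, N⟩) = −sign(⟨v_{b'}, N⟩), and if |I| ≠ |I'| then sign(⟨v_b, N⟩) = sign(⟨v_{b'}, N⟩). In both cases ⟨v_b, N⟩ ≠ 0 and ⟨v_{b'}, N⟩ ≠ 0. -/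
open Finset

/-- The parallelepiped tile `Π_{I,B} = ∑_{i∈I} v_i + ∑_{b∈B} [0, v_b]`. -/
def tileSet {n : ℕ} {E : Type*} [AddCommGroup E] [Module ℝ E]
    (v : Fin n → E) (I B : Finset (Fin n)) : Set E :=
  {z | ∃ α : Fin n → ℝ, (∀ b ∈ B, α b ∈ Set.Icc (0 : ℝ) 1) ∧
    z = (∑ i ∈ I, v i) + ∑ b ∈ B, α b • v b}

/-- A fine zonotopal tiling of the zonotope `Z(V) = ∑_{i=1}^n [0, v_i]`: a collection of
parallelepiped tiles `Π_{I,B}` with `I ∩ B = ∅`, `|B| = d+1`, `{v_b}_{b∈B}` linearly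
independent, covering `Z(V)` and with pairwise disjoint interiors. -/
structure IsFineZonotopalTiling {n : ℕ} {E : Type*} [AddCommGroup E] [Module ℝ E]
    [TopologicalSpace E] (d : ℕ) (v : Fin n → E)
    (P : Finset (Finset (Fin n) × Finset (Fin n))) : Prop where
  disj : ∀ p ∈ P, Disjoint p.1 p.2
  cardB : ∀ p ∈ P, p.2.card = d + 1
  indep : ∀ p ∈ P, LinearIndependent ℝ (fun b : p.2 => v ↑b)
  cover : (⋃ p ∈ P, tileSet v p.1 p.2) = tileSet v ∅ Finset.univ
  intdisj : ∀ p ∈ P, ∀ q ∈ P, p ≠ q →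
    interior (tileSet v p.1 p.2) ∩ interior (tileSet v q.1 q.2) = ∅

/-!
The functional `φ = ⟨N, ·⟩` maps `Π_{I,B}` onto the segment between `φ(∑_I v)` and
`φ(∑_I v) + ⟨v_b, N⟩`, and `Π_{I',B'}` onto the analogous segment for `b'`. The facet relation
gives a common vertex `∑_I v + t v_b = ∑_{I'} v + s v_{b'}` with `t, s ∈ {0, 1}` and
`|I| + t = |I'| + s`. By the separation hypothesis this vertex minimises `φ` on `Π_{I,B}` and
maximises it on `Π_{I',B'}`, which forces `sign ⟨v_b, N⟩ = 1 - 2t` and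
`sign ⟨v_{b'}, N⟩ = 2s - 1`; these are nonzero because the edges of a tile span the space and
`N ≠ 0`.
-/

lemma eq_zero_of_dotProduct_eq_zero_of_span_eq_top {m : Type*} [Fintype m] {ι : Type*}
    {v : ι → m → ℝ} (hv : Submodule.span ℝ (Set.range v) = ⊤) {N : m → ℝ}
    (h : ∀ i, N ⬝ᵥ v i = 0) : N = 0 := by
  have hker : Submodule.span ℝ (Set.range v) ≤ LinearMap.ker (dotProductBilin ℝ ℝ N) := by
    rw [Submodule.span_le]
    rintro _ ⟨i, rfl⟩
    exact h i
  rw [hv, top_le_iff, LinearMap.ker_eq_top] at hker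
  exact dotProduct_self_eq_zero.1 (LinearMap.congr_fun hker N)

lemma mem_inter_of_sdiff_eq_singleton {α : Type*} [DecidableEq α] {s t : Finset α} {a c : α}
    (h : s \ t = {a}) (hc : c ∈ s) (hca : c ≠ a) : c ∈ s ∩ t :=
  mem_inter.2 ⟨hc, by_contra fun hct => hca (mem_singleton.1 (h ▸ mem_sdiff.2 ⟨hc, hct⟩))⟩

lemma Real.sign_eq_one_sub_two_mul {β t : ℝ} (hβ : β ≠ 0) (ht : t = 0 ∨ t = 1)
    (h : t * β ≤ (1 - t) * β) : Real.sign β = 1 - 2 * t := by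
  rcases ht with rfl | rfl
  · rw [Real.sign_of_pos (lt_of_le_of_ne (by simpa using h) hβ.symm)]
    norm_num
  · rw [Real.sign_of_neg (lt_of_le_of_ne (by simpa using h) hβ)]
    norm_num

section Tiles

variable {ι E : Type*} [AddCommGroup E] [Module ℝ E]

lemma add_smul_mem_tileSet {n : ℕ} (v : Fin n → E) {I B : Finset (Fin n)} {b : Fin n}
    (hb : b ∈ B) {t : ℝ} (ht : t ∈ Set.Icc (0 : ℝ) 1) :
    ∑ i ∈ I, v i + t • v b ∈ tileSet v I B := by
  refine ⟨fun c => if c = b then t else 0, fun c _ => ?_, ?_⟩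
  · dsimp only
    split_ifs
    · exact ht
    · exact ⟨le_rfl, zero_le_one⟩
  · simp only [ite_smul, zero_smul, sum_ite_eq', if_pos hb]

lemma sign_dotProduct_eq_of_forall_le {n : ℕ} {m : Type*} [Fintype m] (v : Fin n → m → ℝ)
    {N : m → ℝ} {I B : Finset (Fin n)} {b : Fin n} {t : ℝ} (hb : b ∈ B)
    (hβ : N ⬝ᵥ v b ≠ 0) (ht : t = 0 ∨ t = 1)
    (hmin : ∀ z ∈ tileSet v I B, N ⬝ᵥ (∑ i ∈ I, v i + t • v b) ≤ N ⬝ᵥ z) :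
    Real.sign (N ⬝ᵥ v b) = 1 - 2 * t := by
  have h := hmin _ <|
    add_smul_mem_tileSet v hb (t := 1 - t) (by rcases ht with rfl | rfl <;> norm_num)
  simp only [dotProduct_add, dotProduct_smul, smul_eq_mul, add_le_add_iff_left] at h
  exact Real.sign_eq_one_sub_two_mul hβ ht h

lemma exists_common_vertex [DecidableEq ι] (v : ι → E) {I I' : Finset ι} {b b' : ι}
    (hbI : b ∉ I) (hb'I' : b' ∉ I')
    (h : I = I' ∨ I = insert b' I' ∨ I' = insert b I ∨ insert b I = insert b' I') :
    ∃ t s : ℝ, (t = 0 ∨ t = 1) ∧ (s = 0 ∨ s = 1) ∧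
      ∑ i ∈ I, v i + t • v b = ∑ i ∈ I', v i + s • v b' ∧ (#I : ℝ) + t = #I' + s := by
  rcases h with rfl | rfl | rfl | h
  · exact ⟨0, 0, by simp⟩
  · refine ⟨0, 1, by simp, by simp, ?_, ?_⟩
    · simp [sum_insert hb'I', add_comm]
    · simp [card_insert_of_notMem hb'I']
  · refine ⟨1, 0, by simp, by simp, ?_, ?_⟩
    · simp [sum_insert hbI, add_comm]
    · simp [card_insert_of_notMem hbI]
  · refine ⟨1, 1, by simp, by simp, ?_, ?_⟩
    · have hsum := congrArg (∑ i ∈ ·, v i) h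
      simp only [sum_insert hbI, sum_insert hb'I'] at hsum
      simpa [add_comm] using hsum
    · have hcard := congrArg card h
      rw [card_insert_of_notMem hbI, card_insert_of_notMem hb'I'] at hcard
      exact_mod_cast hcard

end Tiles

namespace IsFineZonotopalTiling

variable {n d : ℕ} {v : Fin n → (Fin (d + 1) → ℝ)} {P : Finset (Finset (Fin n) × Finset (Fin n))}

lemma span_eq_top (hP : IsFineZonotopalTiling d v P) {p : Finset (Fin n) × Finset (Fin n)}
    (hp : p ∈ P) : Submodule.span ℝ (Set.range fun b : p.2 => v b) = ⊤ := by
  have : Nonempty p.2 := (card_pos.1 (by rw [hP.cardB p hp]; omega)).coe_sort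
  refine (hP.indep p hp).span_eq_top_of_card_eq_finrank ?_
  rw [Fintype.card_coe, hP.cardB p hp, Module.finrank_fin_fun]

lemma dotProduct_ne_zero (hP : IsFineZonotopalTiling d v P) {I B : Finset (Fin n)}
    (hmem : (I, B) ∈ P) {N : Fin (d + 1) → ℝ} (hN0 : N ≠ 0) {b : Fin n}
    (hB : ∀ c ∈ B, c ≠ b → N ⬝ᵥ v c = 0) : N ⬝ᵥ v b ≠ 0 := fun h0 =>
  hN0 <| eq_zero_of_dotProduct_eq_zero_of_span_eq_top (hP.span_eq_top hmem) fun ⟨c, hc⟩ => by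
    by_cases hcb : c = b
    · exact hcb ▸ h0
    · exact hB c hc hcb

end IsFineZonotopalTiling

theorem shared_facet_signs_general (n d : ℕ) (v : Fin n → (Fin (d + 1) → ℝ))
    (P : Finset (Finset (Fin n) × Finset (Fin n)))
    (hP : IsFineZonotopalTiling d v P)
    (I B I' B' : Finset (Fin n)) (hmem : (I, B) ∈ P) (hmem' : (I', B') ∈ P)
    (b b' : Fin n) (hbB : b ∈ B) (hb'B' : b' ∈ B')
    (hBb : B \ B' = {b}) (hB'b' : B' \ B = {b'})
    (hshare : I = I' ∨ I = insert b' I' ∨ I' = insert b I ∨ insert b I = insert b' I')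
    (N : Fin (d + 1) → ℝ) (hN0 : N ≠ 0)
    (hNC : ∀ c ∈ B ∩ B', ∑ j, N j * v c j = 0)
    (hsep : ∀ z ∈ tileSet v I B, ∀ z' ∈ tileSet v I' B', 0 ≤ ∑ j, N j * (z j - z' j)) :
    (∑ j, N j * v b j) ≠ 0 ∧ (∑ j, N j * v b' j) ≠ 0 ∧
    (I.card = I'.card →
      Real.sign (∑ j, N j * v b j) = -Real.sign (∑ j, N j * v b' j)) ∧
    (I.card ≠ I'.card →
      Real.sign (∑ j, N j * v b j) = Real.sign (∑ j, N j * v b' j)) := by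
  change N ⬝ᵥ v b ≠ 0 ∧ N ⬝ᵥ v b' ≠ 0 ∧
    (_ → Real.sign (N ⬝ᵥ v b) = -Real.sign (N ⬝ᵥ v b')) ∧
    (_ → Real.sign (N ⬝ᵥ v b) = Real.sign (N ⬝ᵥ v b'))
  have hle : ∀ z ∈ tileSet v I B, ∀ z' ∈ tileSet v I' B', N ⬝ᵥ z' ≤ N ⬝ᵥ z := fun z hz z' hz' =>
    sub_nonneg.1 (dotProduct_sub N z z' ▸ hsep z hz z' hz')
  have hβ : N ⬝ᵥ v b ≠ 0 := hP.dotProduct_ne_zero hmem hN0 fun c hc hcb =>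
    hNC c (mem_inter_of_sdiff_eq_singleton hBb hc hcb)
  have hβ' : N ⬝ᵥ v b' ≠ 0 := hP.dotProduct_ne_zero hmem' hN0 fun c hc hcb =>
    hNC c (inter_comm B' B ▸ mem_inter_of_sdiff_eq_singleton hB'b' hc hcb)
  obtain ⟨t, s, ht, hs, hvertex, hcard⟩ := exists_common_vertex (I := I) (I' := I') v
    (disjoint_right.1 (hP.disj _ hmem) hbB) (disjoint_right.1 (hP.disj _ hmem') hb'B') hshare
  have hmem_vertex : ∑ i ∈ I, v i + t • v b ∈ tileSet v I B :=
    add_smul_mem_tileSet v hbB (by rcases ht with rfl | rfl <;> norm_num)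
  have hmem_vertex' : ∑ i ∈ I, v i + t • v b ∈ tileSet v I' B' :=
    hvertex ▸ add_smul_mem_tileSet v hb'B' (by rcases hs with rfl | rfl <;> norm_num)
  have hsign := sign_dotProduct_eq_of_forall_le v hbB hβ ht fun z hz => hle z hz _ hmem_vertex'
  have hsign' := sign_dotProduct_eq_of_forall_le v hb'B' (N := -N) (by simpa using hβ') hs
    fun z' hz' => by simpa [hvertex, add_comm] using hle _ hmem_vertex z' hz'
  rw [neg_dotProduct, Real.sign_neg] at hsign'
  refine ⟨hβ, hβ', fun hII' => ?_, fun hII' => ?_⟩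
  · obtain rfl : t = s := by rw [hII'] at hcard; linarith
    linarith
  · have hts : t ≠ s := by
      rintro rfl
      exact hII' (by exact_mod_cast add_right_cancel hcard)
    obtain rfl : s = 1 - t := by
      rcases ht with rfl | rfl <;> rcases hs with rfl | rfl <;>
        first | exact absurd rfl hts | norm_num
    linarith

/-- **Shared facet sign rule.** Let `Π_{I,B}` and `Π_{I',B'}` be tiles of a fine
zonotopal tiling sharing a facet with `C = B ∩ B'`, `{b} = B \ B'`, `{b'} = B' \ B`,
and let `N ≠ 0` be a normal to the shared facet oriented so that `⟨z - z', N⟩ ≥ 0` for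
`z ∈ Π_{I,B}`, `z' ∈ Π_{I',B'}`. Then `⟨v_b, N⟩` and `⟨v_{b'}, N⟩` are nonzero, with
opposite signs if `|I| = |I'|` and equal signs otherwise. -/
theorem shared_facet_signs (n d : ℕ) (v : Fin n → (Fin (d + 1) → ℝ))
    (P : Finset (Finset (Fin n) × Finset (Fin n)))
    (hP : IsFineZonotopalTiling d v P)
    (I B I' B' : Finset (Fin n)) (hmem : (I, B) ∈ P) (hmem' : (I', B') ∈ P)
    (hne : (I, B) ≠ (I', B'))
    (b b' : Fin n) (hbB : b ∈ B) (hb'B' : b' ∈ B')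
    (hBb : B \ B' = {b}) (hB'b' : B' \ B = {b'})
    (hCcard : (B ∩ B').card = d)
    (hshare : I = I' ∨ I = insert b' I' ∨ I' = insert b I ∨ insert b I = insert b' I')
    (N : Fin (d + 1) → ℝ) (hN0 : N ≠ 0)
    (hNC : ∀ c ∈ B ∩ B', ∑ j, N j * v c j = 0)
    (hsep : ∀ z ∈ tileSet v I B, ∀ z' ∈ tileSet v I' B', 0 ≤ ∑ j, N j * (z j - z' j)) :
    (∑ j, N j * v b j) ≠ 0 ∧ (∑ j, N j * v b' j) ≠ 0 ∧
    (I.card = I'.card →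
      Real.sign (∑ j, N j * v b j) = -Real.sign (∑ j, N j * v b' j)) ∧
    (I.card ≠ I'.card →
      Real.sign (∑ j, N j * v b j) = Real.sign (∑ j, N j * v b' j)) :=
  shared_facet_signs_general n d v P hP I B I' B' hmem hmem' b b' hbB hb'B' hBb hB'b' hshare N hN0
    hNC hsep
end

section
/- In dimension d = 1, for any fine zonotopal tiling P of Z(V) (regular or not) and any generic point x ∈ ℝ, the directed adjacency graph (G, o_x) with the orientation induced by x is acyclic. -/
open Finset

/-- The oriented adjacency relation induced by a point `x ∈ ℝ` on the tiles of a fine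
zonotopal tiling of `Z(V)` for the lifted one-dimensional configuration
`v_i = (a_i, 1) ∈ ℝ²`. -/
def stepRel1 {n : ℕ} (a : Fin n → ℝ)
    (P : Finset (Finset (Fin n) × Finset (Fin n))) (x : ℝ)
    (p q : Finset (Fin n) × Finset (Fin n)) : Prop :=
  p ∈ P ∧ q ∈ P ∧ p ≠ q ∧
  ∃ b ∈ p.2, ∃ b' ∈ q.2, p.2.erase b = q.2.erase b' ∧
    (p.1 = q.1 ∨ p.1 = insert b' q.1 ∨ q.1 = insert b p.1 ∨
      insert b p.1 = insert b' q.1) ∧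
    ∃ N : Fin 2 → ℝ, N ≠ 0 ∧
      (∀ c ∈ p.2.erase b, ∑ j, N j * ![a c, 1] j = 0) ∧
      0 < ∑ j, N j * ![x, 1] j ∧
      ∀ z ∈ tileSet (fun i => ![a i, 1]) p.1 p.2,
        ∀ z' ∈ tileSet (fun i => ![a i, 1]) q.1 q.2,
          0 ≤ ∑ j, N j * (z' j - z j)

/-! Fix a flip across the facet spanned by `v_c`. Its normal is a multiple of `(1, -a c)`, so the
separation condition compares tile vertices `∑_{i ∈ M} v_i` through `∑_{i ∈ M} side a x c i`,
where `side a x c i = (a i - a c) * (x - a c)`: the common vertex of the two tiles is the upper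
vertex of the first and the lower vertex of the second for this weight (`IsFlip`).

Let `a c₀` be closest to `x`. Then `a c₀` lies on the side of `x` of every `a c`, which forces the
stage of `c₀` (the tile lies before, on, or beyond the zone of `v_{c₀}`) to be monotone along flips, hence constant on a
cycle. If every tile of the cycle spans `c₀`, all its flips are across `c₀` and strictly raise
`∑_{i ∈ lower} side a x c₀ i`, which is absurd. Otherwise no tile of the cycle spans `c₀`, and we
conclude by induction on the set of indices allowed in the `B`'s of the tiles. -/

theorem Relation.TransGen.restrict_fiber {α β : Type*} [PartialOrder β] {r : α → α → Prop}
    {f : α → β} (hf : ∀ u v, r u v → f u ≤ f v) {u v : α} (h : Relation.TransGen r u v)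
    (huv : f u = f v) :
    Relation.TransGen (fun s t => r s t ∧ f s = f u ∧ f t = f u) u v := by
  induction h with
  | single hst => exact .single ⟨hst, rfl, huv.symm⟩
  | @tail s t hus hst ih =>
    have hfs : f u ≤ f s := by
      simpa [Relation.transGen_eq_self] using hus.lift f hf
    have hs : f s = f u := le_antisymm (huv ▸ hf s t hst) hfs
    exact .tail (ih hs.symm) ⟨hst, hs, huv.symm⟩

namespace ZonotopalTile

variable {ι : Type*}

def side (a : ι → ℝ) (x : ℝ) (c k : ι) : ℝ := (a k - a c) * (x - a c)

theorem side_nonneg_of_abs_le {a : ι → ℝ} {x : ℝ} {c k : ι} (h : |x - a k| ≤ |x - a c|) :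
    0 ≤ side a x c k := by
  have : (x - a k) * (x - a c) ≤ (x - a c) * (x - a c) :=
    calc (x - a k) * (x - a c) ≤ |x - a k| * |x - a c| := by
          rw [← abs_mul]; exact le_abs_self _
      _ ≤ |x - a c| * |x - a c| := by gcongr
      _ = (x - a c) * (x - a c) := abs_mul_abs_self _
  unfold side
  linarith

theorem side_ne_zero_of_linearIndependent {a : ι → ℝ} {x : ℝ} {B : Finset ι}
    (hB : LinearIndependent ℝ (fun b : B => ![a b, 1])) {c k : ι} (hk : k ∈ B) (hc : c ∈ B)
    (hkc : k ≠ c) (hxc : x ≠ a c) : side a x c k ≠ 0 := by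
  refine mul_ne_zero (sub_ne_zero.2 fun hak => hkc ?_) (sub_ne_zero.2 hxc)
  exact congrArg Subtype.val (hB.injective (a₁ := ⟨k, hk⟩) (a₂ := ⟨c, hc⟩) (by simp [hak]))

theorem sum_side_le_of_normal {a : ι → ℝ} {x : ℝ} {c : ι} {N : Fin 2 → ℝ}
    (hNc : ∑ j, N j * ![a c, 1] j = 0) (hNx : 0 < ∑ j, N j * ![x, 1] j) {M₁ M₂ : Finset ι}
    (hsep : 0 ≤ ∑ j, N j * ((∑ i ∈ M₂, ![a i, 1]) j - (∑ i ∈ M₁, ![a i, 1]) j)) :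
    ∑ i ∈ M₁, side a x c i ≤ ∑ i ∈ M₂, side a x c i := by
  simp only [Fin.sum_univ_two, Finset.sum_apply, Matrix.cons_val_zero, Matrix.cons_val_one,
    Matrix.cons_val_fin_one, sum_const, nsmul_eq_mul, mul_one] at hNc hNx hsep
  simp only [side, ← Finset.sum_mul, Finset.sum_sub_distrib, sum_const, nsmul_eq_mul]
  rw [← sub_nonneg, ← sub_mul]
  set D := ∑ i ∈ M₂, a i - #M₂ * a c - (∑ i ∈ M₁, a i - #M₁ * a c)
  have hN1 : N 1 = -(N 0 * a c) := by linarith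
  have hND : 0 ≤ N 0 * D := by simp only [D]; rw [hN1] at hsep; linarith
  have hNx' : 0 < N 0 * (x - a c) := by linarith
  have hN0 : N 0 ≠ 0 := by rintro h; simp [h] at hNx'
  refine nonneg_of_mul_nonneg_right (a := N 0 ^ 2) ?_ (by positivity)
  convert mul_nonneg hND hNx'.le using 1
  ring

variable [DecidableEq ι]

/-- `M` indexes the vertex `∑_{i ∈ M} v_i` of the tile `Π_{T.1, T.2}`. -/
def IsVertex (T : Finset ι × Finset ι) (M : Finset ι) : Prop :=
  T.1 ⊆ M ∧ M ⊆ T.1 ∪ T.2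

noncomputable def upper (w : ι → ℝ) (T : Finset ι × Finset ι) : Finset ι :=
  T.1 ∪ T.2.filter (0 < w ·)

noncomputable def lower (w : ι → ℝ) (T : Finset ι × Finset ι) : Finset ι :=
  T.1 ∪ T.2.filter (w · < 0)

variable {w : ι → ℝ} {T : Finset ι × Finset ι} {M : Finset ι} {k : ι}

theorem isVertex_fst : IsVertex T T.1 :=
  ⟨subset_rfl, subset_union_left⟩

theorem isVertex_insert (hk : k ∈ T.2) : IsVertex T (insert k T.1) :=
  ⟨subset_insert _ _, insert_subset (mem_union_right _ hk) subset_union_left⟩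

theorem mem_upper : k ∈ upper w T ↔ k ∈ T.1 ∨ k ∈ T.2 ∧ 0 < w k := by
  simp [upper]

theorem mem_lower : k ∈ lower w T ↔ k ∈ T.1 ∨ k ∈ T.2 ∧ w k < 0 := by
  simp [lower]

theorem lower_eq_upper_neg : lower w T = upper (-w) T := by
  simp [lower, upper]

theorem sum_upper_eq (hT : Disjoint T.1 T.2) :
    ∑ i ∈ upper w T, w i = ∑ i ∈ lower w T, w i + ∑ i ∈ T.2, |w i| := by
  have hpos : Disjoint T.1 (T.2.filter (0 < w ·)) := hT.mono_right (filter_subset _ _)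
  have hneg : Disjoint T.1 (T.2.filter (w · < 0)) := hT.mono_right (filter_subset _ _)
  rw [upper, lower, sum_union hpos, sum_union hneg, add_assoc, sum_filter, sum_filter,
    ← sum_add_distrib]
  congr 1
  refine sum_congr rfl fun i _ => ?_
  rcases lt_trichotomy (w i) 0 with h | h | h
  · simp [h, h.not_gt, abs_of_neg h]
  · simp [h]
  · simp [h, h.not_gt, abs_of_pos h]

/-- Adding or removing a single `k ∈ T.2` gives another vertex, so maximality of `M` decides
whether `k ∈ M` from the sign of `w k`. -/
theorem upper_eq_of_forall_sum_le (hM : IsVertex T M) (hM0 : ∀ k ∈ M, k ∈ T.2 → w k ≠ 0)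
    (hmax : ∀ M', IsVertex T M' → ∑ i ∈ M', w i ≤ ∑ i ∈ M, w i) :
    upper w T = M := by
  ext k
  rw [mem_upper]
  by_cases hk1 : k ∈ T.1
  · simp [hk1, hM.1 hk1]
  by_cases hk2 : k ∈ T.2
  · simp only [hk1, hk2, true_and, false_or]
    by_cases hkM : k ∈ M
    · have := hmax (M.erase k) ⟨fun i hi => mem_erase.2 ⟨fun e => hk1 (e ▸ hi), hM.1 hi⟩,
        (erase_subset _ _).trans hM.2⟩
      rw [← sum_erase_add _ _ hkM] at this
      simpa [hkM] using lt_of_le_of_ne (by linarith) (hM0 k hkM hk2).symm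
    · have := hmax (insert k M) ⟨hM.1.trans (subset_insert _ _),
        insert_subset (mem_union_right _ hk2) hM.2⟩
      rw [sum_insert hkM] at this
      simp only [hkM, iff_false, not_lt]
      linarith
  · simp only [hk1, hk2, false_and, or_self, false_iff]
    intro hkM
    simpa [hk1, hk2] using hM.2 hkM

theorem lower_eq_of_forall_le_sum (hM : IsVertex T M) (hM0 : ∀ k ∈ M, k ∈ T.2 → w k ≠ 0)
    (hmin : ∀ M', IsVertex T M' → ∑ i ∈ M, w i ≤ ∑ i ∈ M', w i) :
    lower w T = M := by
  rw [lower_eq_upper_neg]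
  refine upper_eq_of_forall_sum_le hM (fun k hk hk2 => by simpa using hM0 k hk hk2)
    fun M' hM' => ?_
  simpa [sum_neg_distrib] using hmin M' hM'

theorem exists_isVertex_isVertex {p q : Finset ι × Finset ι} {b b' c : ι} (hb : b ∈ p.2)
    (hb' : b' ∈ q.2) (hcb : c ≠ b) (hcp : c ∉ p.1)
    (h : p.1 = q.1 ∨ p.1 = insert b' q.1 ∨ q.1 = insert b p.1 ∨ insert b p.1 = insert b' q.1) :
    ∃ M, IsVertex p M ∧ IsVertex q M ∧ c ∉ M := by
  have hcb : c ∉ insert b p.1 := by simp [hcb, hcp]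
  rcases h with h | h | h | h
  · exact ⟨p.1, isVertex_fst, h ▸ isVertex_fst, hcp⟩
  · exact ⟨p.1, isVertex_fst, h ▸ isVertex_insert hb', hcp⟩
  · exact ⟨q.1, h ▸ isVertex_insert hb, isVertex_fst, h ▸ hcb⟩
  · exact ⟨_, isVertex_insert hb, h ▸ isVertex_insert hb', hcb⟩

structure IsFlip (a : ι → ℝ) (x : ℝ) (c : ι) (p q : Finset ι × Finset ι) : Prop where
  mem_fst : c ∈ p.2
  mem_snd : c ∈ q.2
  disjoint_fst : Disjoint p.1 p.2
  disjoint_snd : Disjoint q.1 q.2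
  side_ne_zero : ∀ k ∈ p.2 ∪ q.2, k ≠ c → side a x c k ≠ 0
  exists_ne : ∃ k ∈ p.2, k ≠ c
  upper_eq_lower : upper (side a x c) p = lower (side a x c) q

def Flip (a : ι → ℝ) (x : ℝ) (p q : Finset ι × Finset ι) : Prop := ∃ c, IsFlip a x c p q

/-- `0`, `1`, `2` according as the tile `T` lies before, on, or beyond the zone of `v_k`. -/
def stage (k : ι) (T : Finset ι × Finset ι) : ℕ :=
  if k ∈ T.2 then 1 else if k ∈ T.1 then 2 else 0

theorem stage_eq_one_iff : stage k T = 1 ↔ k ∈ T.2 := by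
  unfold stage
  split_ifs <;> simp_all

namespace IsFlip

variable {a : ι → ℝ} {x : ℝ} {c : ι} {p q : Finset ι × Finset ι}

theorem mem_iff (h : IsFlip a x c p q) :
    k ∈ p.1 ∨ k ∈ p.2 ∧ 0 < side a x c k ↔ k ∈ q.1 ∨ k ∈ q.2 ∧ side a x c k < 0 := by
  rw [← mem_upper, ← mem_lower, h.upper_eq_lower]

theorem eq_of_mem (h : IsFlip a x c p q) (hp : k ∈ p.2) (hq : k ∈ q.2) : k = c := by
  by_contra hkc
  have hk0 := h.side_ne_zero k (mem_union_left _ hp) hkc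
  have hp1 : k ∉ p.1 := disjoint_right.1 h.disjoint_fst hp
  have hq1 : k ∉ q.1 := disjoint_right.1 h.disjoint_snd hq
  have := h.mem_iff (k := k)
  simp only [hp, hq, hp1, hq1, true_and, false_or] at this
  rcases hk0.lt_or_gt with hlt | hlt
  · exact hlt.not_gt (this.2 hlt)
  · exact hlt.not_gt (this.1 hlt)

theorem stage_le (h : IsFlip a x c p q) (hk : 0 ≤ side a x c k) : stage k p ≤ stage k q := by
  have hiff := h.mem_iff (k := k)
  unfold stage
  by_cases hp : k ∈ p.2 <;> by_cases hq : k ∈ q.2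
  · simp [hp, hq]
  · have hpos : 0 < side a x c k := hk.lt_of_ne
      (h.side_ne_zero k (mem_union_left _ hp) fun e => hq (e ▸ h.mem_snd)).symm
    have : k ∈ q.1 := by simpa [hp, hq, hpos] using hiff
    simp [hp, hq, this]
  · have hpos : 0 < side a x c k := hk.lt_of_ne
      (h.side_ne_zero k (mem_union_right _ hq) fun e => hp (e ▸ h.mem_fst)).symm
    have hq1 : k ∉ q.1 := disjoint_right.1 h.disjoint_snd hq
    have : k ∉ p.1 := by simpa [hp, hq, hq1, hpos.not_gt] using hiff
    simp [hp, hq, this]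
  · have : k ∈ p.1 ↔ k ∈ q.1 := by simpa [hp, hq] using hiff
    simp [hp, hq, this]

theorem sum_lower_lt (h : IsFlip a x c p q) :
    ∑ i ∈ lower (side a x c) p, side a x c i < ∑ i ∈ lower (side a x c) q, side a x c i := by
  obtain ⟨b, hb, hbc⟩ := h.exists_ne
  rw [← h.upper_eq_lower, sum_upper_eq h.disjoint_fst, lt_add_iff_pos_right]
  exact sum_pos' (fun i _ => abs_nonneg _)
    ⟨b, hb, abs_pos.2 (h.side_ne_zero b (mem_union_left _ hb) hbc)⟩

end IsFlip

theorem not_transGen_flip_of_subset (a : ι → ℝ) (x : ℝ) (S : Finset ι)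
    (p : Finset ι × Finset ι) :
    ¬ Relation.TransGen (fun u v => Flip a x u v ∧ u.2 ⊆ S ∧ v.2 ⊆ S) p p := by
  induction S using Finset.strongInduction generalizing p with
  | H S ih =>
  intro hcyc
  obtain ⟨u, ⟨⟨c, hc⟩, hu, -⟩, -⟩ := Relation.TransGen.head'_iff.1 hcyc
  obtain ⟨c₀, hc₀S, hclosest⟩ :=
    S.exists_min_image (fun i => |x - a i|) ⟨c, hu hc.mem_fst⟩
  have hmono : ∀ u v, (Flip a x u v ∧ u.2 ⊆ S ∧ v.2 ⊆ S) → stage c₀ u ≤ stage c₀ v :=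
    fun u v ⟨⟨c, hc⟩, hu, _⟩ =>
      hc.stage_le (side_nonneg_of_abs_le (hclosest c (hu hc.mem_fst)))
  have hfiber := hcyc.restrict_fiber hmono rfl
  by_cases hp : c₀ ∈ p.2
  · have hstep : ∀ u v, (Flip a x u v ∧ u.2 ⊆ S ∧ v.2 ⊆ S) ∧ stage c₀ u = stage c₀ p ∧
        stage c₀ v = stage c₀ p →
        ∑ i ∈ lower (side a x c₀) u, side a x c₀ i <
          ∑ i ∈ lower (side a x c₀) v, side a x c₀ i := by
      rintro u v ⟨⟨⟨c, hc⟩, -⟩, hu, hv⟩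
      have hp1 : stage c₀ p = 1 := stage_eq_one_iff.2 hp
      obtain rfl := hc.eq_of_mem (stage_eq_one_iff.1 (hu.trans hp1))
        (stage_eq_one_iff.1 (hv.trans hp1))
      exact hc.sum_lower_lt
    have := hfiber.lift _ hstep
    rw [Relation.transGen_eq_self] at this
    exact lt_irrefl _ this
  · have hmap : ∀ u v, (Flip a x u v ∧ u.2 ⊆ S ∧ v.2 ⊆ S) ∧ stage c₀ u = stage c₀ p ∧
        stage c₀ v = stage c₀ p → Flip a x u v ∧ u.2 ⊆ S.erase c₀ ∧ v.2 ⊆ S.erase c₀ := by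
      rintro u v ⟨⟨hflip, hu, hv⟩, hcu, hcv⟩
      have hp1 : stage c₀ p ≠ 1 := fun h' => hp (stage_eq_one_iff.1 h')
      refine ⟨hflip, fun i hi => mem_erase.2 ⟨?_, hu hi⟩, fun i hi => mem_erase.2 ⟨?_, hv hi⟩⟩
      · rintro rfl; exact hp1 (hcu ▸ stage_eq_one_iff.2 hi)
      · rintro rfl; exact hp1 (hcv ▸ stage_eq_one_iff.2 hi)
    exact ih _ (erase_ssubset hc₀S) p (Relation.TransGen.mono hmap _ _ hfiber)

theorem flip_acyclic [Fintype ι] (a : ι → ℝ) (x : ℝ) (p : Finset ι × Finset ι) :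
    ¬ Relation.TransGen (Flip a x) p p := fun hcyc =>
  not_transGen_flip_of_subset a x univ p
    (Relation.TransGen.mono (fun _ _ h => ⟨h, subset_univ _, subset_univ _⟩) _ _ hcyc)

theorem IsVertex.sum_mem_tileSet {n : ℕ} {E : Type*} [AddCommGroup E] [Module ℝ E]
    {T : Finset (Fin n) × Finset (Fin n)} {M : Finset (Fin n)} (hM : IsVertex T M)
    (hT : Disjoint T.1 T.2) (v : Fin n → E) : ∑ i ∈ M, v i ∈ tileSet v T.1 T.2 := by
  refine ⟨fun i => if i ∈ M then 1 else 0, fun b _ => by dsimp only; split_ifs <;> simp, ?_⟩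
  have hsplit : M = T.1 ∪ T.2.filter (· ∈ M) := by
    ext k
    have := @hM.1 k
    have := @hM.2 k
    simp only [mem_union, mem_filter] at *
    tauto
  simp only [ite_smul, one_smul, zero_smul, ← sum_filter]
  conv_lhs => rw [hsplit]
  exact sum_union (hT.mono_right (filter_subset _ _))

theorem exists_isFlip_of_stepRel1 {n : ℕ} {a : Fin n → ℝ}
    {P : Finset (Finset (Fin n) × Finset (Fin n))}
    (hP : IsFineZonotopalTiling 1 (fun i => ![a i, 1]) P) {x : ℝ}
    {p q : Finset (Fin n) × Finset (Fin n)} (h : stepRel1 a P x p q) :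
    ∃ c, IsFlip a x c p q := by
  obtain ⟨hp, hq, -, b, hb, b', hb', herase, hI, N, -, hNc, hNx, hsep⟩ := h
  obtain ⟨c, hc⟩ : (p.2.erase b).Nonempty := by
    rw [← card_pos, card_erase_of_mem hb, hP.cardB p hp]
    norm_num
  have hcq : c ∈ q.2.erase b' := herase ▸ hc
  have hxc : x ≠ a c := by
    rintro rfl
    exact hNx.ne' (hNc _ hc)
  have hside : ∀ k ∈ p.2 ∪ q.2, k ≠ c → side a x c k ≠ 0 := by
    intro k hk hkc
    rcases mem_union.1 hk with hk | hk
    · exact side_ne_zero_of_linearIndependent (hP.indep p hp) hk (mem_of_mem_erase hc) hkc hxc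
    · exact side_ne_zero_of_linearIndependent (hP.indep q hq) hk (mem_of_mem_erase hcq) hkc hxc
  have hle : ∀ M₁ M₂, IsVertex p M₁ → IsVertex q M₂ →
      ∑ i ∈ M₁, side a x c i ≤ ∑ i ∈ M₂, side a x c i := fun M₁ M₂ h₁ h₂ =>
    sum_side_le_of_normal (hNc c hc) hNx
      (hsep _ (h₁.sum_mem_tileSet (hP.disj p hp) _) _ (h₂.sum_mem_tileSet (hP.disj q hq) _))
  obtain ⟨M, hMp, hMq, hcM⟩ := exists_isVertex_isVertex hb hb' (ne_of_mem_erase hc)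
    (disjoint_right.1 (hP.disj p hp) (mem_of_mem_erase hc)) hI
  refine ⟨c, mem_of_mem_erase hc, mem_of_mem_erase hcq, hP.disj p hp, hP.disj q hq, hside,
    ⟨b, hb, (ne_of_mem_erase hc).symm⟩, ?_⟩
  rw [upper_eq_of_forall_sum_le hMp ?_ fun M' hM' => hle M' M hM' hMq,
    lower_eq_of_forall_le_sum hMq ?_ fun M' hM' => hle M M' hMp hM']
  · exact fun i hi hi2 => hside i (mem_union_right _ hi2) (ne_of_mem_of_not_mem hi hcM)
  · exact fun i hi hi2 => hside i (mem_union_left _ hi2) (ne_of_mem_of_not_mem hi hcM)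

end ZonotopalTile

theorem one_dim_graph_acyclic_general (n : ℕ) (a : Fin n → ℝ)
    (P : Finset (Finset (Fin n) × Finset (Fin n)))
    (hP : IsFineZonotopalTiling 1 (fun i => ![a i, 1]) P)
    (x : ℝ) :
    ∀ p, ¬ Relation.TransGen (stepRel1 a P x) p p := fun p hcyc =>
  ZonotopalTile.flip_acyclic a x p
    (Relation.TransGen.mono (fun _ _ h => ZonotopalTile.exists_isFlip_of_stepRel1 hP h) _ _ hcyc)

/-- **Acyclicity in dimension one.**  For any fine zonotopal tiling `P` of `Z(V)`
(regular or not) over a one-dimensional point configuration, and any generic point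
`x ∈ ℝ` (distinct from every point defining an internal facet), the directed adjacency
graph with the orientation induced by `x` is acyclic. -/
theorem one_dim_graph_acyclic (n : ℕ) (a : Fin n → ℝ)
    (P : Finset (Finset (Fin n) × Finset (Fin n)))
    (hP : IsFineZonotopalTiling 1 (fun i => ![a i, 1]) P)
    (x : ℝ)
    (hx : ∀ p ∈ P, ∀ b ∈ p.2,
      (∃ q ∈ P, q ≠ p ∧ ∃ b' ∈ q.2, p.2.erase b = q.2.erase b') →
      ∀ c ∈ p.2.erase b, x ≠ a c) :
    ∀ p, ¬ Relation.TransGen (stepRel1 a P x) p p :=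
  one_dim_graph_acyclic_general n a P hP x
end
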